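/- arXiv:0709.1977 — 13 statements merged into one kernel-verified Lean document; each statement's English description precedes it below -/
import Mathlib

section
/- For all positive integers a, b, n with a > b, the factorial ratio (2an)! (bn)! / ((an)! (2bn)! ((a-b)n)!) is an integer. -/
/-!
By Legendre's formula the divisibility holds as soon as, for every `q = p ^ k`,
`⌊x + y⌋ + ⌊2y⌋ + ⌊x⌋ ≤ ⌊2(x + y)⌋ + ⌊y⌋` with `x = (a - b)n / q`, `y = bn / q` (Landau's
criterion). Subtracting integer parts leaves remainders `c, v < q`, and there the only possible
excess on the left, the carry of `c + v`, is paid for by `⌊2(c + v)/q⌋ ≥ 2`.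
-/

open Nat Finset

theorem Nat.prod_factorial_dvd_prod_factorial_of_sum_div_le {ι κ : Type*} {s : Finset ι}
    {t : Finset κ} {f : ι → ℕ} {g : κ → ℕ}
    (h : ∀ q, 0 < q → ∑ i ∈ s, f i / q ≤ ∑ j ∈ t, g j / q) :
    ∏ i ∈ s, (f i)! ∣ ∏ j ∈ t, (g j)! := by
  rw [← factorization_le_iff_dvd (by positivity) (by positivity)]
  intro p
  by_cases hp : p.Prime
  · set b := ∑ i ∈ s, f i + ∑ j ∈ t, g j + 1
    have legendre : ∀ m ≤ ∑ i ∈ s, f i + ∑ j ∈ t, g j,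
        (m)!.factorization p = ∑ k ∈ Ico 1 b, m / p ^ k := fun m hm =>
      factorization_factorial hp ((log_le_self p m).trans_lt (Nat.lt_succ_of_le hm))
    have hf : ∀ i ∈ s, (f i)!.factorization p = ∑ k ∈ Ico 1 b, f i / p ^ k := fun i hi =>
      legendre _ ((single_le_sum (fun _ _ => Nat.zero_le _) hi).trans (Nat.le_add_right _ _))
    have hg : ∀ j ∈ t, (g j)!.factorization p = ∑ k ∈ Ico 1 b, g j / p ^ k := fun j hj =>
      legendre _ ((single_le_sum (fun _ _ => Nat.zero_le _) hj).trans (Nat.le_add_left _ _))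
    rw [factorization_prod_apply fun _ _ => factorial_ne_zero _,
      factorization_prod_apply fun _ _ => factorial_ne_zero _,
      sum_congr rfl hf, sum_congr rfl hg, sum_comm, sum_comm (s := t)]
    exact sum_le_sum fun k _ => h _ (pow_pos hp.pos k)
  · simp [factorization_eq_zero_of_not_prime _ hp]

theorem Nat.add_div_add_two_mul_div_le {c v q : ℕ} (hc : c < q) (hv : v < q) :
    (c + v) / q + 2 * v / q ≤ 2 * (c + v) / q := by
  rcases lt_or_ge (c + v) q with hcv | hcv
  · rw [Nat.div_eq_of_lt hcv, zero_add]
    exact Nat.div_le_div_right (by omega)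
  · have h1 : (c + v) / q ≤ 1 :=
      Nat.le_of_lt_succ ((Nat.div_lt_iff_lt_mul (by omega)).2 (by omega))
    have h2 : 2 * v / q ≤ 1 :=
      Nat.le_of_lt_succ ((Nat.div_lt_iff_lt_mul (by omega)).2 (by omega))
    have h3 : 2 ≤ 2 * (c + v) / q := (Nat.le_div_iff_mul_le (by omega)).2 (by omega)
    omega

theorem Nat.add_div_add_two_mul_div_add_div_le (q c v : ℕ) :
    (c + v) / q + 2 * v / q + c / q ≤ 2 * (c + v) / q + v / q := by
  rcases q.eq_zero_or_pos with rfl | hq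
  · simp
  obtain ⟨k, c, hc, rfl⟩ : ∃ k c', c' < q ∧ c = c' + q * k :=
    ⟨c / q, c % q, mod_lt _ hq, (mod_add_div c q).symm⟩
  obtain ⟨l, v, hv, rfl⟩ : ∃ l v', v' < q ∧ v = v' + q * l :=
    ⟨v / q, v % q, mod_lt _ hq, (mod_add_div v q).symm⟩
  have hsplit : ∀ x y, (x + q * y) / q = x / q + y := fun x y => add_mul_div_left x y hq
  rw [show c + q * k + (v + q * l) = c + v + q * (k + l) by ring,
    show 2 * (v + q * l) = 2 * v + q * (2 * l) by ring,
    show 2 * (c + v + q * (k + l)) = 2 * (c + v) + q * (2 * (k + l)) by ring,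
    hsplit, hsplit, hsplit, hsplit, hsplit, div_eq_of_lt hc, div_eq_of_lt hv]
  have := add_div_add_two_mul_div_le hc hv
  omega

theorem stmt_1_general (a b n : ℕ) (hab : b < a) :
    (Nat.factorial (a * n) * Nat.factorial (2 * b * n) * Nat.factorial ((a - b) * n)) ∣
      (Nat.factorial (2 * a * n) * Nat.factorial (b * n)) := by
  obtain ⟨c, rfl⟩ : ∃ c, a = c + b := ⟨a - b, (Nat.sub_add_cancel hab.le).symm⟩
  have landau := prod_factorial_dvd_prod_factorial_of_sum_div_le
    (f := ![c * n + b * n, 2 * (b * n), c * n]) (g := ![2 * (c * n + b * n), b * n])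
    (s := univ) (t := univ) fun q _ => by
      simpa [Fin.sum_univ_three] using add_div_add_two_mul_div_add_div_le q (c * n) (b * n)
  simpa [Fin.prod_univ_three, Nat.add_mul, mul_assoc] using landau

theorem stmt_1 (a b n : ℕ) (hb : 0 < b) (hab : b < a) (hn : 0 < n) :
    (Nat.factorial (a * n) * Nat.factorial (2 * b * n) * Nat.factorial ((a - b) * n)) ∣
      (Nat.factorial (2 * a * n) * Nat.factorial (b * n)) :=
  stmt_1_general a b n hab
end

section
/- For all positive integers a, b, n, the factorial ratio (2an)! (2bn)! / ((an)! (bn)! ((a+b)n)!) is an integer. -/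
open Nat

lemma key_div_ineq (m n k : ℕ) :
    m / k + n / k + (m + n) / k ≤ 2 * m / k + 2 * n / k := by
  rcases Nat.eq_zero_or_pos k with rfl | hk
  · simp
  rw [two_mul, two_mul, Nat.add_div hk, Nat.add_div hk, Nat.add_div hk]
  have hm := Nat.mod_lt m hk
  have hn := Nat.mod_lt n hk
  split_ifs <;> omega

theorem stmt_2 (a b n : ℕ) (ha : 0 < a) (hb : 0 < b) (hn : 0 < n) :
    (Nat.factorial (a * n) * Nat.factorial (b * n) * Nat.factorial ((a + b) * n)) ∣
      (Nat.factorial (2 * a * n) * Nat.factorial (2 * b * n)) := by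
  have hf : ∀ m : ℕ, m ! ≠ 0 := fun m => (Nat.factorial_pos m).ne'
  rw [← Nat.factorization_le_iff_dvd
    (by positivity) (by positivity)]
  rw [Finsupp.le_def]
  intro p
  rw [Nat.factorization_mul (by positivity) (hf _), Nat.factorization_mul (hf _) (hf _),
    Nat.factorization_mul (hf _) (hf _)]
  simp only [Finsupp.add_apply]
  by_cases hp : p.Prime
  · haveI : Fact p.Prime := ⟨hp⟩
    simp only [Nat.factorization_def _ hp]
    set S := 2 * (a * n) + 2 * (b * n) with hS
    set B := Nat.log p S + 1 with hB
    have hlog : ∀ x : ℕ, x ≤ S → Nat.log p x < B := by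
      intro x hx
      exact lt_of_le_of_lt (Nat.log_mono_right hx) (Nat.lt_succ_self _)
    have hab : (a + b) * n = a * n + b * n := add_mul a b n
    have hx : ∀ m : ℕ, m ≤ 2 * m := fun m => by omega
    have h1 : a * n ≤ S := le_trans (hx _) (Nat.le_add_right _ _)
    have h2 : b * n ≤ S := le_trans (hx _) (Nat.le_add_left _ _)
    have h3 : (a + b) * n ≤ S := by rw [hab]; exact Nat.add_le_add (hx _) (hx _)
    have h4 : 2 * a * n ≤ S := by rw [mul_assoc]; exact Nat.le_add_right _ _
    have h5 : 2 * b * n ≤ S := by rw [mul_assoc]; exact Nat.le_add_left _ _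
    rw [padicValNat_factorial (hlog _ h1), padicValNat_factorial (hlog _ h2),
      padicValNat_factorial (hlog _ h3), padicValNat_factorial (hlog _ h4),
      padicValNat_factorial (hlog _ h5)]
    rw [← Finset.sum_add_distrib, ← Finset.sum_add_distrib, ← Finset.sum_add_distrib]
    apply Finset.sum_le_sum
    intro i _
    have := key_div_ineq (a * n) (b * n) (p ^ i)
    rw [add_mul]
    calc a * n / p ^ i + b * n / p ^ i + (a * n + b * n) / p ^ i
        ≤ 2 * (a * n) / p ^ i + 2 * (b * n) / p ^ i := this
      _ = 2 * a * n / p ^ i + 2 * b * n / p ^ i := by rw [mul_assoc, mul_assoc]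
  · simp [Nat.factorization_eq_zero_of_not_prime _ hp]
end

section
/- For every positive integer n, the factorial ratio (30n)! n! / ((15n)! (10n)! (6n)!) is an integer. -/
lemma key_div (u : ℕ) : u / 2 + u / 3 + u / 5 ≤ u + u / 30 := by omega

lemma floor_ineq (n k : ℕ) :
    15 * n / k + 10 * n / k + 6 * n / k ≤ 30 * n / k + n / k := by
  rcases Nat.eq_zero_or_pos k with rfl | hk
  · simp
  have h2 : 15 * n / k = 30 * n / k / 2 := by
    rw [Nat.div_div_eq_div_mul]
    rw [show 30 * n = 2 * (15 * n) by ring, show k * 2 = 2 * k by ring,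
      Nat.mul_div_mul_left _ _ (by norm_num)]
  have h3 : 10 * n / k = 30 * n / k / 3 := by
    rw [Nat.div_div_eq_div_mul]
    rw [show 30 * n = 3 * (10 * n) by ring, show k * 3 = 3 * k by ring,
      Nat.mul_div_mul_left _ _ (by norm_num)]
  have h5 : 6 * n / k = 30 * n / k / 5 := by
    rw [Nat.div_div_eq_div_mul]
    rw [show 30 * n = 5 * (6 * n) by ring, show k * 5 = 5 * k by ring,
      Nat.mul_div_mul_left _ _ (by norm_num)]
  have h30 : n / k = 30 * n / k / 30 := by
    rw [Nat.div_div_eq_div_mul, show k * 30 = 30 * k by ring,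
      Nat.mul_div_mul_left _ _ (by norm_num)]
  rw [h2, h3, h5, h30]
  exact key_div _

theorem stmt_3 (n : ℕ) (hn : 0 < n) :
    (Nat.factorial (15 * n) * Nat.factorial (10 * n) * Nat.factorial (6 * n)) ∣
      (Nat.factorial (30 * n) * Nat.factorial n) := by
  have fne : ∀ m : ℕ, Nat.factorial m ≠ 0 := fun m => (Nat.factorial_pos m).ne'
  rw [← Nat.factorization_le_iff_dvd (by positivity) (by positivity)]
  rw [Finsupp.le_def]
  intro p
  by_cases hp : p.Prime
  · haveI : Fact p.Prime := ⟨hp⟩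
    set b := Nat.log p (30 * n) + 1 with hb
    have hlog : ∀ m : ℕ, m ≤ 30 * n → Nat.log p m < b := fun m hm =>
      Nat.lt_succ_of_le (Nat.log_mono_right hm)
    rw [Nat.factorization_mul (by positivity) (fne _),
      Nat.factorization_mul (fne _) (fne _),
      Nat.factorization_mul (fne _) (fne _)]
    simp only [Finsupp.add_apply, Nat.factorization_def _ hp]
    rw [padicValNat_factorial (hlog (15 * n) (by omega)),
      padicValNat_factorial (hlog (10 * n) (by omega)),
      padicValNat_factorial (hlog (6 * n) (by omega)),
      padicValNat_factorial (hlog (30 * n) le_rfl),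
      padicValNat_factorial (p := p) (n := n) (hlog n (by omega)),
      ← Finset.sum_add_distrib, ← Finset.sum_add_distrib, ← Finset.sum_add_distrib]
    exact Finset.sum_le_sum fun i _ => floor_ineq n (p ^ i)
  · simp [Nat.factorization_eq_zero_of_not_prime _ hp]
end

section
/- For every real number x, the step function f(x) = floor(x) - floor(x/2) - floor(x/3) - floor(x/5) + floor(x/30) takes only the values 0 and 1. -/
lemma floor_div_pos_int (x : ℝ) (n : ℤ) (hn : 0 < n) : ⌊x / (n : ℝ)⌋ = ⌊x⌋ / n := by
  have hn' : (0:ℝ) < (n:ℝ) := by exact_mod_cast hn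
  have key : ∀ m : ℤ, m ≤ ⌊x / (n : ℝ)⌋ ↔ m ≤ ⌊x⌋ / n := by
    intro m
    rw [Int.le_floor, le_div_iff₀ hn', Int.le_ediv_iff_mul_le hn, ← Int.cast_mul, ← Int.le_floor]
  have h1 := (key ⌊x / (n : ℝ)⌋).mp le_rfl
  have h2 := (key (⌊x⌋ / n)).mpr le_rfl
  omega

theorem stmt_4 (x : ℝ) :
    ⌊x⌋ - ⌊x / 2⌋ - ⌊x / 3⌋ - ⌊x / 5⌋ + ⌊x / 30⌋ = 0 ∨
    ⌊x⌋ - ⌊x / 2⌋ - ⌊x / 3⌋ - ⌊x / 5⌋ + ⌊x / 30⌋ = 1 := by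
  have h2 := floor_div_pos_int x 2 (by norm_num)
  have h3 := floor_div_pos_int x 3 (by norm_num)
  have h5 := floor_div_pos_int x 5 (by norm_num)
  have h30 := floor_div_pos_int x 30 (by norm_num)
  push_cast at h2 h3 h5 h30
  rw [h2, h3, h5, h30]
  omega
end

section
/- Let a_1, ..., a_K and b_1, ..., b_L be positive integers. The factorial ratio u_n = (a_1 n)! ··· (a_K n)! / ((b_1 n)! ··· (b_L n)!) is an integer for all natural numbers n if and only if the step function f(x) = Σ_{k=1}^K floor(a_k x) - Σ_{l=1}^L floor(b_l x) is nonnegative for all x in [0,1]. -/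
-- floor of c * (r/m) equals nat division
lemma aux_floor_mul_div (c r m : ℕ) :
    ⌊(c : ℝ) * ((r : ℝ) / (m : ℝ))⌋ = ((c * r) / m : ℕ) := by
  have h : (c : ℝ) * ((r : ℝ) / (m : ℝ)) = ((c * r : ℕ) : ℝ) / (m : ℝ) := by
    push_cast; ring
  rw [h, ← Int.natCast_floor_eq_floor (by positivity), Nat.floor_div_eq_div]

-- Key arithmetic lemma
lemma aux_key (K L : ℕ) (a : Fin K → ℕ) (b : Fin L → ℕ)
    (H : ∀ x ∈ Set.Icc (0 : ℝ) 1,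
      0 ≤ (∑ k, ⌊(a k : ℝ) * x⌋) - (∑ l, ⌊(b l : ℝ) * x⌋))
    (n m : ℕ) : (∑ l, (b l * n) / m) ≤ ∑ k, (a k * n) / m := by
  rcases Nat.eq_zero_or_pos m with rfl | hm
  · simp
  set q := n / m with hq
  set r := n % m with hr
  have hsplit : ∀ c : ℕ, (c * n) / m = c * q + (c * r) / m := by
    intro c
    conv_lhs => rw [← Nat.div_add_mod n m]
    rw [mul_add, ← mul_assoc, mul_comm c m, mul_assoc, Nat.mul_add_div hm]
  have h1 : (∑ l, b l) ≤ ∑ k, a k := by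
    have := H 1 ⟨zero_le_one, le_refl 1⟩
    simp only [mul_one, Int.floor_natCast, sub_nonneg] at this
    exact_mod_cast this
  have h2 : (∑ l, (b l * r) / m) ≤ ∑ k, (a k * r) / m := by
    have hrm : (r : ℝ) / m ∈ Set.Icc (0 : ℝ) 1 := by
      constructor
      · positivity
      · rw [div_le_one (by exact_mod_cast hm)]
        exact_mod_cast (Nat.mod_lt n hm).le
    have := H _ hrm
    simp only [aux_floor_mul_div, sub_nonneg] at this
    exact_mod_cast this
  simp only [hsplit]
  rw [Finset.sum_add_distrib, Finset.sum_add_distrib, ← Finset.sum_mul, ← Finset.sum_mul]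
  exact add_le_add (Nat.mul_le_mul_right q h1) h2

lemma aux_dvd (K L : ℕ) (a : Fin K → ℕ) (b : Fin L → ℕ)
    (H : ∀ x ∈ Set.Icc (0 : ℝ) 1,
      0 ≤ (∑ k, ⌊(a k : ℝ) * x⌋) - (∑ l, ⌊(b l : ℝ) * x⌋))
    (n : ℕ) : (∏ l, Nat.factorial (b l * n)) ∣ (∏ k, Nat.factorial (a k * n)) := by
  have hne1 : (∏ l, Nat.factorial (b l * n)) ≠ 0 :=
    Finset.prod_ne_zero_iff.mpr fun _ _ => Nat.factorial_ne_zero _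
  have hne2 : (∏ k, Nat.factorial (a k * n)) ≠ 0 :=
    Finset.prod_ne_zero_iff.mpr fun _ _ => Nat.factorial_ne_zero _
  rw [← Nat.factorization_le_iff_dvd hne1 hne2, Finsupp.le_def]
  intro p
  by_cases hp : p.Prime
  · haveI : Fact p.Prime := ⟨hp⟩
    set S : ℕ := (∑ k, a k * n) + (∑ l, b l * n) with hS
    set B : ℕ := Nat.log p S + 1 with hB
    have hfac : ∀ m : ℕ, m ≤ S →
        (Nat.factorial m).factorization p = ∑ i ∈ Finset.Ico 1 B, m / p ^ i := by
      intro m hm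
      rw [Nat.factorization_def _ hp, padicValNat_factorial
        (lt_of_le_of_lt (Nat.log_mono_right hm) (Nat.lt_succ_self _))]
    have hbS : ∀ l, b l * n ≤ S := fun l =>
      le_trans (Finset.single_le_sum (f := fun l => b l * n)
        (fun _ _ => Nat.zero_le _) (Finset.mem_univ l)) (Nat.le_add_left _ _)
    have haS : ∀ k, a k * n ≤ S := fun k =>
      le_trans (Finset.single_le_sum (f := fun k => a k * n)
        (fun _ _ => Nat.zero_le _) (Finset.mem_univ k)) (Nat.le_add_right _ _)
    rw [Nat.factorization_prod (fun _ _ => Nat.factorial_ne_zero _),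
        Nat.factorization_prod (fun _ _ => Nat.factorial_ne_zero _)]
    rw [Finset.sum_apply', Finset.sum_apply']
    calc ∑ l, (Nat.factorial (b l * n)).factorization p
        = ∑ l, ∑ i ∈ Finset.Ico 1 B, (b l * n) / p ^ i := by
          exact Finset.sum_congr rfl fun l _ => hfac _ (hbS l)
      _ = ∑ i ∈ Finset.Ico 1 B, ∑ l, (b l * n) / p ^ i := Finset.sum_comm
      _ ≤ ∑ i ∈ Finset.Ico 1 B, ∑ k, (a k * n) / p ^ i := by
          exact Finset.sum_le_sum fun i _ => aux_key K L a b H n (p ^ i)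
      _ = ∑ k, ∑ i ∈ Finset.Ico 1 B, (a k * n) / p ^ i := Finset.sum_comm
      _ = ∑ k, (Nat.factorial (a k * n)).factorization p := by
          exact Finset.sum_congr rfl fun k _ => (hfac _ (haS k)).symm
  · simp [Nat.factorization_eq_zero_of_not_prime _ hp]

lemma aux_rev (K L : ℕ) (a : Fin K → ℕ) (b : Fin L → ℕ)
    (ha : ∀ k, 0 < a k) (hb : ∀ l, 0 < b l)
    (hdvd : ∀ n : ℕ, (∏ l, Nat.factorial (b l * n)) ∣ (∏ k, Nat.factorial (a k * n)))
    (x : ℝ) (hx0 : 0 ≤ x) (hx1 : x ≤ 1) :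
    0 ≤ (∑ k, ⌊(a k : ℝ) * x⌋) - (∑ l, ⌊(b l : ℝ) * x⌋) := by
  set ε : ℕ → ℝ := fun c => (⌊(c : ℝ) * x⌋ : ℝ) + 1 - c * x with hεdef
  have hε : ∀ c : ℕ, 0 < ε c := fun c => by
    simp only [hεdef]; linarith [Int.lt_floor_add_one ((c : ℝ) * x)]
  set g : ℕ → ℝ := fun c => (c : ℝ) / ε c + 2 * c with hgdef
  have hg : ∀ c : ℕ, 0 ≤ g c := fun c => by
    have := hε c; positivity
  set B : ℝ := (∑ k, g (a k)) + (∑ l, g (b l)) + 1 with hBdef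
  obtain ⟨p, hp1, hp2⟩ := Nat.exists_infinite_primes (⌈B⌉₊ + 1)
  have hp0 : 0 < p := hp2.pos
  have hpR : (0 : ℝ) < p := by exact_mod_cast hp0
  have hpB : B < p := by
    have h1 : B ≤ ⌈B⌉₊ := Nat.le_ceil B
    have h2 : (⌈B⌉₊ : ℝ) + 1 ≤ p := by exact_mod_cast hp1
    linarith
  have hgak : ∀ k, g (a k) < (p : ℝ) := fun k => by
    have h1 : g (a k) ≤ ∑ k, g (a k) :=
      Finset.single_le_sum (fun k _ => hg (a k)) (Finset.mem_univ k)
    have h2 : 0 ≤ ∑ l, g (b l) := Finset.sum_nonneg fun l _ => hg (b l)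
    simp only [hBdef] at hpB; linarith
  have hgbl : ∀ l, g (b l) < (p : ℝ) := fun l => by
    have h1 : g (b l) ≤ ∑ l, g (b l) :=
      Finset.single_le_sum (fun l _ => hg (b l)) (Finset.mem_univ l)
    have h2 : 0 ≤ ∑ k, g (a k) := Finset.sum_nonneg fun k _ => hg (a k)
    simp only [hBdef] at hpB; linarith
  obtain ⟨n, hn0, hn1, hn2⟩ : ∃ n : ℕ, 0 < n ∧ x * p < n ∧ (n : ℝ) ≤ x * p + 1 := by
    refine ⟨⌊x * p⌋₊ + 1, Nat.succ_pos _, ?_, ?_⟩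
    · have := Nat.lt_floor_add_one (x * p)
      push_cast; push_cast at this; linarith
    · have := Nat.floor_le (show (0:ℝ) ≤ x * p by positivity)
      push_cast; linarith
  set y : ℝ := (n : ℝ) / p with hydef
  have hy1 : x < y := (lt_div_iff₀ hpR).mpr (by linarith)
  have hy2 : y ≤ x + 1 / p := by
    rw [hydef, div_le_iff₀ hpR]; rw [add_mul, one_div, inv_mul_cancel₀ hpR.ne']
    linarith
  -- floor equality for any coefficient with g c < p
  have hfloor : ∀ c : ℕ, 0 < c → g c < (p : ℝ) → ⌊(c : ℝ) * y⌋ = ⌊(c : ℝ) * x⌋ := by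
    intro c hc hcp
    have hcR : (0 : ℝ) < c := by exact_mod_cast hc
    have hdivp : (c : ℝ) / ε c < p := by
      have : 0 ≤ 2 * (c : ℝ) := by positivity
      simp only [hgdef] at hcp; linarith
    have hcp2 : (c : ℝ) / p < ε c := by
      rw [div_lt_iff₀ hpR]
      rw [div_lt_iff₀ (hε c)] at hdivp
      linarith
    refine le_antisymm ?_ (Int.floor_le_floor (by nlinarith))
    have hlt : (c : ℝ) * y < (⌊(c : ℝ) * x⌋ : ℝ) + 1 := by
      have h1 : (c : ℝ) * y ≤ c * x + c / p := by
        have := mul_le_mul_of_nonneg_left hy2 hcR.le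
        rw [mul_add] at this
        rw [mul_one_div] at this
        linarith
      simp only [hεdef] at hcp2
      linarith
    have := Int.floor_lt.mpr (show (c : ℝ) * y < ((⌊(c : ℝ) * x⌋ + 1 : ℤ) : ℝ) by
      push_cast; exact hlt)
    omega
  -- size bound for Legendre
  have hsize : ∀ c : ℕ, 0 < c → g c < (p : ℝ) → c * n < p ^ 2 := by
    intro c hc hcp
    have hcR : (0 : ℝ) < c := by exact_mod_cast hc
    have h2c : 2 * (c : ℝ) < p := by
      have h0 : 0 ≤ (c : ℝ) / ε c := by have := hε c; positivity
      simp only [hgdef] at hcp; linarith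
    have : (c : ℝ) * n < (p : ℝ) ^ 2 := by
      have h1 : (c : ℝ) * n ≤ c * (p + 1) := by
        have : (n : ℝ) ≤ p + 1 := by nlinarith
        nlinarith
      have hp1R : (1 : ℝ) ≤ p := by exact_mod_cast hp0
      nlinarith
    have h2 : ((c * n : ℕ) : ℝ) < ((p ^ 2 : ℕ) : ℝ) := by push_cast; exact this
    exact_mod_cast h2
  -- Legendre: factorization of (c*n)! at p equals (c*n)/p
  haveI : Fact p.Prime := ⟨hp2⟩
  have hleg : ∀ c : ℕ, 0 < c → g c < (p : ℝ) →
      (Nat.factorial (c * n)).factorization p = (c * n) / p := by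
    intro c hc hcp
    have hlog : Nat.log p (c * n) < 2 := by
      rcases Nat.eq_zero_or_pos (c * n) with h | h
      · simp [h]
      · exact Nat.log_lt_of_lt_pow h.ne' (hsize c hc hcp)
    rw [Nat.factorization_def _ hp2, padicValNat_factorial hlog]
    simp
  -- apply divisibility at n
  have hne1 : (∏ l, Nat.factorial (b l * n)) ≠ 0 :=
    Finset.prod_ne_zero_iff.mpr fun _ _ => Nat.factorial_ne_zero _
  have hne2 : (∏ k, Nat.factorial (a k * n)) ≠ 0 :=
    Finset.prod_ne_zero_iff.mpr fun _ _ => Nat.factorial_ne_zero _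
  have hle := (Nat.factorization_le_iff_dvd hne1 hne2).mpr (hdvd n)
  have hlep := Finsupp.le_def.mp hle p
  rw [Nat.factorization_prod (fun _ _ => Nat.factorial_ne_zero _),
      Nat.factorization_prod (fun _ _ => Nat.factorial_ne_zero _),
      Finset.sum_apply', Finset.sum_apply'] at hlep
  have hlb : ∀ l, (Nat.factorial (b l * n)).factorization p = (b l * n) / p :=
    fun l => hleg (b l) (hb l) (hgbl l)
  have hla : ∀ k, (Nat.factorial (a k * n)).factorization p = (a k * n) / p :=
    fun k => hleg (a k) (ha k) (hgak k)
  simp only [hlb, hla] at hlep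
  -- convert to floors
  have hfin : (∑ l, ⌊(b l : ℝ) * x⌋) ≤ ∑ k, ⌊(a k : ℝ) * x⌋ := by
    have hcast : (∑ l, (((b l * n) / p : ℕ) : ℤ)) ≤ ∑ k, (((a k * n) / p : ℕ) : ℤ) := by
      exact_mod_cast hlep
    calc (∑ l, ⌊(b l : ℝ) * x⌋) = ∑ l, (((b l * n) / p : ℕ) : ℤ) := by
          refine Finset.sum_congr rfl fun l _ => ?_
          rw [← aux_floor_mul_div, ← hydef, hfloor (b l) (hb l) (hgbl l)]
      _ ≤ ∑ k, (((a k * n) / p : ℕ) : ℤ) := hcast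
      _ = ∑ k, ⌊(a k : ℝ) * x⌋ := by
          refine Finset.sum_congr rfl fun k _ => ?_
          rw [← aux_floor_mul_div, ← hydef, hfloor (a k) (ha k) (hgak k)]
  linarith

theorem stmt_5 (K L : ℕ) (a : Fin K → ℕ) (b : Fin L → ℕ)
    (ha : ∀ k, 0 < a k) (hb : ∀ l, 0 < b l) :
    (∀ n : ℕ, (∏ l, Nat.factorial (b l * n)) ∣ (∏ k, Nat.factorial (a k * n))) ↔
    (∀ x ∈ Set.Icc (0 : ℝ) 1,
      0 ≤ (∑ k, ⌊(a k : ℝ) * x⌋) - (∑ l, ⌊(b l : ℝ) * x⌋)) := by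
  constructor
  · intro hdvd x hx
    exact aux_rev K L a b ha hb hdvd x hx.1 hx.2
  · intro H n
    exact aux_dvd K L a b H n
end

section
/- Let a_1, ..., a_K and b_1, ..., b_L be positive integers with Σ a_k = Σ b_l, and let f(x) = Σ_{k=1}^K floor(a_k x) - Σ_{l=1}^L floor(b_l x). Then for any integer n, there exists x with f(x) = -n if and only if there exists x' with f(x') = L - K + n. -/
/-!
At a point `t` where no `a_k t`, `b_l t` is an integer, `⌊-y⌋ = -⌊y⌋ - 1` for each of these `K + L`
terms gives `f (-t) = L - K - f t`. Since each `⌊c x⌋` is right-continuous and locally constant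
from the right, every value of `f` is also taken at an irrational point `t`, where `c t` is
irrational for every positive integer `c`. Hence `m` is a value of `f` iff `L - K - m` is.
-/

open Filter Topology

theorem Irrational.floor_neg {r : ℝ} (hr : Irrational r) : ⌊-r⌋ = -⌊r⌋ - 1 := by
  have hceil : ⌈r⌉ = ⌊r⌋ + 1 :=
    (Int.ceil_eq_floor_add_one_iff_notMem r).2 fun ⟨m, hm⟩ => hr.ne_int m hm.symm
  rw [Int.floor_neg, hceil]
  ring

theorem eventually_floor_mul_eq_nhdsGE {c : ℝ} (hc : 0 ≤ c) (x : ℝ) :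
    ∀ᶠ t in 𝓝[≥] x, ⌊c * t⌋ = ⌊c * x⌋ := by
  have hmul : Tendsto (c * ·) (𝓝[≥] x) (𝓝[≥] (c * x)) :=
    (continuous_const_mul c).continuousWithinAt.tendsto_nhdsWithin
      fun t (ht : x ≤ t) => mul_le_mul_of_nonneg_left ht hc
  exact tendsto_pure.1 ((tendsto_floor_right_pure_floor (c * x)).comp hmul)

theorem Filter.Eventually.exists_irrational_of_nhdsGE {p : ℝ → Prop} {x : ℝ}
    (h : ∀ᶠ t in 𝓝[≥] x, p t) : ∃ t, Irrational t ∧ p t := by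
  obtain ⟨u, hxu, hu⟩ :=
    mem_nhdsGT_iff_exists_Ioo_subset.1 (nhdsWithin_mono x Set.Ioi_subset_Ici_self h)
  obtain ⟨t, ht, hxt, htu⟩ := exists_irrational_btwn hxu
  exact ⟨t, ht, hu ⟨hxt, htu⟩⟩

section FloorSum

variable {ι : Type*} [Fintype ι]

noncomputable def floorSum (c : ι → ℕ) (x : ℝ) : ℤ := ∑ i, ⌊(c i : ℝ) * x⌋

theorem eventually_floorSum_eq_nhdsGE (c : ι → ℕ) (x : ℝ) :
    ∀ᶠ t in 𝓝[≥] x, floorSum c t = floorSum c x :=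
  (eventually_all.2 fun i => eventually_floor_mul_eq_nhdsGE (Nat.cast_nonneg (c i)) x).mono
    fun _ ht => Finset.sum_congr rfl fun i _ => ht i

theorem floorSum_neg {c : ι → ℕ} (hc : ∀ i, 0 < c i) {t : ℝ} (ht : Irrational t) :
    floorSum c (-t) = -floorSum c t - Fintype.card ι := by
  have h : ∀ i, ⌊(c i : ℝ) * -t⌋ = -⌊(c i : ℝ) * t⌋ - 1 := fun i => by
    rw [mul_neg, (ht.natCast_mul (hc i).ne').floor_neg]
  simp only [floorSum, h, Finset.sum_sub_distrib, Finset.sum_neg_distrib, Finset.sum_const,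
    Finset.card_univ, nsmul_eq_mul, mul_one]

end FloorSum

theorem exists_floorSum_sub_floorSum_eq {K L : ℕ} {a : Fin K → ℕ} {b : Fin L → ℕ}
    (ha : ∀ k, 0 < a k) (hb : ∀ l, 0 < b l) (x : ℝ) :
    ∃ x', floorSum a x' - floorSum b x' = L - K - (floorSum a x - floorSum b x) := by
  obtain ⟨t, ht, hat, hbt⟩ := ((eventually_floorSum_eq_nhdsGE a x).and
    (eventually_floorSum_eq_nhdsGE b x)).exists_irrational_of_nhdsGE
  refine ⟨-t, ?_⟩
  rw [floorSum_neg ha ht, floorSum_neg hb ht, hat, hbt, Fintype.card_fin, Fintype.card_fin]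
  ring

theorem stmt_7_general (K L : ℕ) (a : Fin K → ℕ) (b : Fin L → ℕ)
    (ha : ∀ k, 0 < a k) (hb : ∀ l, 0 < b l) (n : ℤ) :
    (∃ x : ℝ, (∑ k, ⌊(a k : ℝ) * x⌋) - (∑ l, ⌊(b l : ℝ) * x⌋) = -n) ↔
    (∃ x' : ℝ, (∑ k, ⌊(a k : ℝ) * x'⌋) - (∑ l, ⌊(b l : ℝ) * x'⌋) = (L : ℤ) - K + n) := by
  change (∃ x, floorSum a x - floorSum b x = -n) ↔ ∃ x', floorSum a x' - floorSum b x' = L - K + n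
  constructor
  · rintro ⟨x, hx⟩
    obtain ⟨x', hx'⟩ := exists_floorSum_sub_floorSum_eq ha hb x
    exact ⟨x', by rw [hx', hx]; ring⟩
  · rintro ⟨x, hx⟩
    obtain ⟨x', hx'⟩ := exists_floorSum_sub_floorSum_eq ha hb x
    exact ⟨x', by rw [hx', hx]; ring⟩

theorem stmt_7 (K L : ℕ) (a : Fin K → ℕ) (b : Fin L → ℕ)
    (ha : ∀ k, 0 < a k) (hb : ∀ l, 0 < b l)
    (hsum : (∑ k, a k) = (∑ l, b l)) (n : ℤ) :
    (∃ x : ℝ, (∑ k, ⌊(a k : ℝ) * x⌋) - (∑ l, ⌊(b l : ℝ) * x⌋) = -n) ↔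
    (∃ x' : ℝ, (∑ k, ⌊(a k : ℝ) * x'⌋) - (∑ l, ⌊(b l : ℝ) * x'⌋) = (L : ℤ) - K + n) :=
  stmt_7_general K L a b ha hb n
end

section
/- Let a_1, ..., a_K and b_1, ..., b_L be positive integers with Σ a_k = Σ b_l, and let f(x) = Σ_{k=1}^K floor(a_k x) - Σ_{l=1}^L floor(b_l x). Then f is nonnegative everywhere if and only if the maximum value attained by f is L - K. -/
lemma flr_aux (n : ℕ) (hn : 0 < n) (x ε : ℝ) (hε : 0 < ε)
    (h : (n : ℝ) * ε ≤ ⌊(n : ℝ) * x⌋ + 1 - n * x) :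
    ⌊(n : ℝ) * (-x - ε)⌋ = -⌊(n : ℝ) * x⌋ - 1 := by
  have hn' : (0 : ℝ) < n := by exact_mod_cast hn
  rw [Int.floor_eq_iff]
  constructor
  · push_cast
    nlinarith [Int.floor_le ((n : ℝ) * x)]
  · push_cast
    nlinarith [Int.floor_le ((n : ℝ) * x)]

theorem stmt_8 (K L : ℕ) (a : Fin K → ℕ) (b : Fin L → ℕ)
    (ha : ∀ k, 0 < a k) (hb : ∀ l, 0 < b l)
    (hsum : (∑ k, a k) = (∑ l, b l)) :
    (∀ x : ℝ, 0 ≤ (∑ k, ⌊(a k : ℝ) * x⌋) - (∑ l, ⌊(b l : ℝ) * x⌋)) ↔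
    IsGreatest (Set.range fun x : ℝ => (∑ k, ⌊(a k : ℝ) * x⌋) - (∑ l, ⌊(b l : ℝ) * x⌋))
      ((L : ℤ) - K) := by
  classical
  set f : ℝ → ℤ := fun x => (∑ k, ⌊(a k : ℝ) * x⌋) - (∑ l, ⌊(b l : ℝ) * x⌋) with hf
  have key : ∀ x : ℝ, ∃ y : ℝ, f x + f y = (L : ℤ) - K := by
    intro x
    set g : Fin K ⊕ Fin L → ℝ :=
      Sum.elim (fun k => (⌊(a k : ℝ) * x⌋ + 1 - a k * x) / (a k))
               (fun l => (⌊(b l : ℝ) * x⌋ + 1 - b l * x) / (b l)) with hg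
    set S : Finset ℝ := insert 1 (Finset.univ.image g) with hSdef
    have hS : S.Nonempty := ⟨1, Finset.mem_insert_self _ _⟩
    set ε := S.min' hS with hε
    have hgpos : ∀ i, 0 < g i := by
      rintro (k | l)
      · exact div_pos (by nlinarith [Int.lt_floor_add_one ((a k : ℝ) * x)])
          (by exact_mod_cast ha k)
      · exact div_pos (by nlinarith [Int.lt_floor_add_one ((b l : ℝ) * x)])
          (by exact_mod_cast hb l)
    have hεpos : 0 < ε := by
      rw [hε, Finset.lt_min'_iff]
      intro y hy
      rcases Finset.mem_insert.mp hy with rfl | hy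
      · norm_num
      · obtain ⟨i, _, rfl⟩ := Finset.mem_image.mp hy
        exact hgpos i
    have hεle : ∀ i, ε ≤ g i := fun i =>
      Finset.min'_le _ _ (Finset.mem_insert_of_mem (Finset.mem_image_of_mem g (Finset.mem_univ i)))
    have hA : ∀ k, ⌊(a k : ℝ) * (-x - ε)⌋ = -⌊(a k : ℝ) * x⌋ - 1 := by
      intro k
      apply flr_aux _ (ha k) _ _ hεpos
      have hak : (0 : ℝ) < a k := by exact_mod_cast ha k
      have := hεle (Sum.inl k)
      rw [hg] at this
      simp only [Sum.elim_inl] at this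
      rw [le_div_iff₀ hak] at this
      linarith
    have hB : ∀ l, ⌊(b l : ℝ) * (-x - ε)⌋ = -⌊(b l : ℝ) * x⌋ - 1 := by
      intro l
      apply flr_aux _ (hb l) _ _ hεpos
      have hbl : (0 : ℝ) < b l := by exact_mod_cast hb l
      have := hεle (Sum.inr l)
      rw [hg] at this
      simp only [Sum.elim_inr] at this
      rw [le_div_iff₀ hbl] at this
      linarith
    refine ⟨-x - ε, ?_⟩
    simp only [hf]
    rw [Finset.sum_congr rfl (fun k _ => hA k), Finset.sum_congr rfl (fun l _ => hB l)]
    simp [Finset.sum_sub_distrib, Finset.sum_neg_distrib, Finset.sum_const, Finset.card_univ]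
    ring
  constructor
  · intro hpos
    constructor
    · obtain ⟨y, hy⟩ := key 0
      have h0 : f 0 = 0 := by simp [hf]
      exact ⟨y, by rw [h0] at hy; linarith⟩
    · rintro z ⟨x, rfl⟩
      obtain ⟨y, hy⟩ := key x
      have := hpos y
      show f x ≤ (L : ℤ) - K
      simp only [hf] at hy this ⊢
      linarith
  · rintro ⟨hmem, hub⟩ x
    obtain ⟨y, hy⟩ := key x
    have := hub (Set.mem_range_self (f := f) y)
    simp only [hf] at hy this ⊢
    linarith
end

section
/- Let a_1, ..., a_K and b_1, ..., b_L be positive integers such that u_n = (a_1 n)! ··· (a_K n)! / ((b_1 n)! ··· (b_L n)!) is not an integer for some n. Then there exists an integer P such that for every prime p > P, there exists some n with the p-adic valuation of u_n (as a rational number) negative. -/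
/-!
By Legendre's formula, `v_p(u_n) = ∑_{i ≥ 1} Δ(n / p^i)` with `Δ(x) = ∑ ⌊a_k x⌋ - ∑ ⌊b_l x⌋`.
A non-integral `u_{n₀}` has a prime `q` with `v_q(u_{n₀}) < 0`, so `Δ(s / t) < 0` for `s = n₀`
and some `t = q^i`. For a large prime `p`, take `n = ⌈p s / t⌉`: then `n / p` lies in
`[s / t, s / t + 1 / p)`, on which every `⌊c x⌋` is constant because the fractional part of
`c s / t` is at most `1 - 1 / t`; and `c n < p²`, so `v_p(u_n) = Δ(n / p) = Δ(s / t) < 0`.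
-/

open Finset Nat

lemma padicValRat_finset_prod {p : ℕ} [Fact p.Prime] {ι : Type*} (s : Finset ι) {f : ι → ℚ}
    (hf : ∀ i ∈ s, f i ≠ 0) : padicValRat p (∏ i ∈ s, f i) = ∑ i ∈ s, padicValRat p (f i) := by
  classical
  induction s using Finset.induction_on with
  | empty => simp
  | insert j s hj ih =>
    rw [prod_insert hj, sum_insert hj, padicValRat.mul (hf j (mem_insert_self j s))
      (prod_ne_zero_iff.mpr fun i hi => hf i (mem_insert_of_mem hi)),
      ih fun i hi => hf i (mem_insert_of_mem hi)]

lemma padicValRat_prod_factorial (p : ℕ) [Fact p.Prime] {ι : Type*} [Fintype ι] {m : ι → ℕ}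
    {B : ℕ} (hm : ∀ i, Nat.log p (m i) < B) :
    padicValRat p (∏ i, ((m i)! : ℚ)) = ∑ k ∈ Ico 1 B, ∑ i, ((m i / p ^ k : ℕ) : ℤ) := by
  rw [padicValRat_finset_prod _ fun i _ => by positivity, sum_comm]
  refine sum_congr rfl fun i _ => ?_
  rw [padicValRat.of_nat, padicValNat_factorial (hm i)]
  push_cast
  rfl

lemma exists_prime_padicValRat_neg_of_not_int {q : ℚ} (h : ¬ ∃ m : ℤ, q = m) :
    ∃ p : ℕ, p.Prime ∧ padicValRat p q < 0 := by
  have hden : q.den ≠ 1 := fun hd => h ⟨q.num, (Rat.coe_int_num_of_den_eq_one hd).symm⟩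
  set p := q.den.minFac
  have hp : p.Prime := Nat.minFac_prime hden
  have := Fact.mk hp
  have hp_den : p ∣ q.den := Nat.minFac_dvd _
  have hp_num : ¬ (p : ℤ) ∣ q.num := by
    rw [Int.natCast_dvd]
    exact fun hd => hp.one_lt.ne' (Nat.Coprime.eq_one_of_dvd
      (Nat.Coprime.coprime_dvd_left hd q.reduced) hp_den)
  refine ⟨p, hp, ?_⟩
  rw [padicValRat_def, padicValInt.eq_zero_of_not_dvd hp_num]
  have := one_le_padicValNat_of_dvd q.den_nz hp_den
  omega

section NearApproximation

-- The hypotheses `p * s ≤ t * n` and `t * n < p * s + t` say that `n = ⌈p s / t⌉`.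
variable {c s t p n : ℕ}

lemma mul_mul_lt_of_near (hc : 0 < c) (hct : c * t ≤ p) (hhi : t * n < p * s + t) :
    t * (c * n) < p * (c * s + 1) :=
  calc t * (c * n) = c * (t * n) := by ring
    _ < c * (p * s + t) := Nat.mul_lt_mul_of_pos_left hhi hc
    _ = p * (c * s) + c * t := by ring
    _ ≤ p * (c * s) + p := Nat.add_le_add_left hct _
    _ = p * (c * s + 1) := by ring

lemma mul_div_eq_mul_div_of_near (hct : c * t ≤ p) (hlo : p * s ≤ t * n)
    (hhi : t * n < p * s + t) : c * n / p = c * s / t := by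
  obtain rfl | hc := Nat.eq_zero_or_pos c
  · simp
  have ht : 0 < t := by nlinarith
  set m := c * s / t
  have hm_lo : t * m ≤ c * s := Nat.mul_div_le _ _
  have hm_hi : c * s + 1 ≤ t * (m + 1) := Nat.lt_mul_div_succ _ ht
  apply Nat.div_eq_of_lt_le
  · refine Nat.le_of_mul_le_mul_left ?_ ht
    calc t * (m * p) = p * (t * m) := by ring
      _ ≤ p * (c * s) := Nat.mul_le_mul_left _ hm_lo
      _ = c * (p * s) := by ring
      _ ≤ c * (t * n) := Nat.mul_le_mul_left _ hlo
      _ = t * (c * n) := by ring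
  · refine Nat.lt_of_mul_lt_mul_left (a := t) ?_
    calc t * (c * n) < p * (c * s + 1) := mul_mul_lt_of_near hc hct hhi
      _ ≤ p * (t * (m + 1)) := Nat.mul_le_mul_left _ hm_hi
      _ = t * ((m + 1) * p) := by ring

lemma mul_lt_sq_of_near (ht : 0 < t) (hcs : c * s < p) (hct : c * t ≤ p)
    (hhi : t * n < p * s + t) : c * n < p ^ 2 := by
  obtain rfl | hc := Nat.eq_zero_or_pos c
  · simpa using pow_pos (by simpa using hcs) 2
  refine Nat.lt_of_mul_lt_mul_left (a := t) ?_
  calc t * (c * n) < p * (c * s + 1) := mul_mul_lt_of_near hc hct hhi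
    _ ≤ p * p := Nat.mul_le_mul_left _ hcs
    _ = 1 * p ^ 2 := by ring
    _ ≤ t * p ^ 2 := Nat.mul_le_mul_right _ ht

lemma exists_near (ht : 0 < t) (p s : ℕ) : ∃ n, p * s ≤ t * n ∧ t * n < p * s + t := by
  refine ⟨(p * s + t - 1) / t, ?_, ?_⟩
  · have := Nat.lt_mul_div_succ (p * s + t - 1) ht
    rw [mul_add] at this
    omega
  · have := Nat.mul_div_le (p * s + t - 1) t
    omega

end NearApproximation

section FactorialRatio

variable {ι κ : Type*} [Fintype ι] [Fintype κ] (a : ι → ℕ) (b : κ → ℕ)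

def factorialRatio (n : ℕ) : ℚ := (∏ i, ((a i * n)! : ℚ)) / ∏ j, ((b j * n)! : ℚ)

/-- `Δ(s / t)`, with the floors computed by `ℕ` division. -/
def landauDelta (s t : ℕ) : ℤ := ∑ i, ((a i * s / t : ℕ) : ℤ) - ∑ j, ((b j * s / t : ℕ) : ℤ)

variable {a b}

theorem padicValRat_factorialRatio (p : ℕ) [Fact p.Prime] {n B : ℕ}
    (ha : ∀ i, Nat.log p (a i * n) < B) (hb : ∀ j, Nat.log p (b j * n) < B) :
    padicValRat p (factorialRatio a b n) = ∑ k ∈ Ico 1 B, landauDelta a b n (p ^ k) := by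
  rw [factorialRatio, padicValRat.div (by positivity) (by positivity),
    padicValRat_prod_factorial p ha, padicValRat_prod_factorial p hb, ← sum_sub_distrib]
  rfl

lemma exists_landauDelta_neg_of_padicValRat_neg {p n : ℕ} [Fact p.Prime]
    (h : padicValRat p (factorialRatio a b n) < 0) : ∃ k, landauDelta a b n (p ^ k) < 0 := by
  set M := ∑ i, a i * n + ∑ j, b j * n
  have hlog : ∀ c, c ≤ M → Nat.log p c < Nat.log p M + 1 := fun c hc =>
    Nat.lt_succ_of_le (Nat.log_mono_right hc)
  have ha : ∀ i, a i * n ≤ M := fun i =>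
    le_add_right (single_le_sum_of_canonicallyOrdered (f := (a · * n)) (mem_univ i))
  have hb : ∀ j, b j * n ≤ M := fun j =>
    le_add_left (single_le_sum_of_canonicallyOrdered (f := (b · * n)) (mem_univ j))
  rw [padicValRat_factorialRatio p (fun i => hlog _ (ha i)) (fun j => hlog _ (hb j))] at h
  by_contra! hΔ
  exact h.not_ge (sum_nonneg fun k _ => hΔ k)

lemma padicValRat_factorialRatio_eq_landauDelta {p n : ℕ} [Fact p.Prime]
    (ha : ∀ i, a i * n < p ^ 2) (hb : ∀ j, b j * n < p ^ 2) :
    padicValRat p (factorialRatio a b n) = landauDelta a b n p := by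
  rw [padicValRat_factorialRatio p (B := 2) (fun i => Nat.log_lt_of_lt_pow' two_ne_zero (ha i))
    (fun j => Nat.log_lt_of_lt_pow' two_ne_zero (hb j))]
  simp

lemma exists_padicValRat_factorialRatio_neg {s t p : ℕ} [Fact p.Prime] (ht : 0 < t)
    (hΔ : landauDelta a b s t < 0) (ha : ∀ i, a i * (s + t) < p) (hb : ∀ j, b j * (s + t) < p) :
    ∃ n, padicValRat p (factorialRatio a b n) < 0 := by
  obtain ⟨n, hlo, hhi⟩ := exists_near ht p s
  have hnear : ∀ c, c * (s + t) < p → c * n < p ^ 2 ∧ c * n / p = c * s / t := fun c hc =>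
    have hct : c * t ≤ p := ((Nat.mul_le_mul_left c (Nat.le_add_left t s)).trans_lt hc).le
    ⟨mul_lt_sq_of_near ht ((Nat.mul_le_mul_left c (Nat.le_add_right s t)).trans_lt hc) hct hhi,
      mul_div_eq_mul_div_of_near hct hlo hhi⟩
  refine ⟨n, ?_⟩
  rw [padicValRat_factorialRatio_eq_landauDelta (fun i => (hnear _ (ha i)).1)
    (fun j => (hnear _ (hb j)).1)]
  convert hΔ using 1
  unfold landauDelta
  congr 1 <;> refine sum_congr rfl fun i _ => ?_
  · rw [(hnear _ (ha i)).2]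
  · rw [(hnear _ (hb i)).2]

end FactorialRatio

theorem stmt_10_general (K L : ℕ) (a : Fin K → ℕ) (b : Fin L → ℕ)
    (u : ℕ → ℚ)
    (hu : ∀ n, u n = (∏ k, (Nat.factorial (a k * n) : ℚ)) /
                     (∏ l, (Nat.factorial (b l * n) : ℚ)))
    (hnotint : ∃ n : ℕ, ¬ ∃ m : ℤ, u n = m) :
    ∃ P : ℤ, ∀ p : ℕ, p.Prime → P < (p : ℤ) →
      ∃ n : ℕ, padicValRat p (u n) < 0 := by
  obtain rfl : u = factorialRatio a b := funext hu
  obtain ⟨s, hs⟩ := hnotint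
  obtain ⟨q, hq, hvq⟩ := exists_prime_padicValRat_neg_of_not_int hs
  have := Fact.mk hq
  obtain ⟨i, hΔ⟩ := exists_landauDelta_neg_of_padicValRat_neg hvq
  set C := ∑ k, a k + ∑ l, b l
  refine ⟨C * (s + q ^ i), fun p hp hpP => ?_⟩
  have := Fact.mk hp
  have hC : ∀ c, c ≤ C → c * (s + q ^ i) < p := fun c hc =>
    (Nat.mul_le_mul_right _ hc).trans_lt (by exact_mod_cast hpP)
  exact exists_padicValRat_factorialRatio_neg (pow_pos hq.pos i) hΔ
    (fun k => hC _ ((single_le_sum_of_canonicallyOrdered (mem_univ k)).trans le_self_add))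
    (fun l => hC _ ((single_le_sum_of_canonicallyOrdered (mem_univ l)).trans le_add_self))

theorem stmt_10 (K L : ℕ) (a : Fin K → ℕ) (b : Fin L → ℕ)
    (ha : ∀ k, 0 < a k) (hb : ∀ l, 0 < b l)
    (u : ℕ → ℚ)
    (hu : ∀ n, u n = (∏ k, (Nat.factorial (a k * n) : ℚ)) /
                     (∏ l, (Nat.factorial (b l * n) : ℚ)))
    (hnotint : ∃ n : ℕ, ¬ ∃ m : ℤ, u n = m) :
    ∃ P : ℤ, ∀ p : ℕ, p.Prime → P < (p : ℤ) →
      ∃ n : ℕ, padicValRat p (u n) < 0 :=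
  stmt_10_general K L a b u hu hnotint
end

section
/- Let a_1, ..., a_K and b_1, ..., b_L be positive integers with a_k ≠ b_l for all k, l. If the sequences u_n(a,b) and u_n(a',b') agree for all n, where (a',b') also satisfies a'_k ≠ b'_l for all k,l, then a' is a permutation (multiset equality) of a and b' is a permutation of b. -/
open Nat Multiset

lemma key_div_s13 (p B v m : ℕ) (hv : 1 ≤ v) (hvB : v ≤ B) (hm : m ≤ B)
    (hp : B ^ 3 + B ^ 2 < p) : m * ((p + v - 1) / v) / p = m / v := by
  have hB : 1 ≤ B := le_trans hv hvB
  set n := (p + v - 1) / v with hn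
  have hdm : v * n + (p + v - 1) % v = p + v - 1 := by
    rw [hn]; exact Nat.div_add_mod _ _
  have hmod := Nat.mod_lt (p + v - 1) (show 0 < v from hv)
  have hp1 : 1 ≤ p := by nlinarith
  have h1 : p ≤ v * n := by omega
  have h2 : v * n ≤ p + v - 1 := by omega
  -- n > B^2 + B
  have hvb2 : v * (B ^ 2 + B) ≤ B ^ 3 + B ^ 2 := by nlinarith
  have h3 : B ^ 2 + B < n := by
    by_contra hcon
    push_neg at hcon
    have : v * n ≤ v * (B ^ 2 + B) := Nat.mul_le_mul_left v hcon
    omega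
  set q := m / v with hq
  set r := m % v with hr
  have hdm2 : v * q + m % v = m := by rw [hq]; exact Nat.div_add_mod _ _
  have hrv : r < v := Nat.mod_lt m hv
  have hqB : q ≤ B := le_trans (Nat.div_le_self m v) hm
  apply Nat.div_eq_of_lt_le
  · calc q * p ≤ q * (v * n) := Nat.mul_le_mul_left q h1
    _ = (v * q) * n := by ring
    _ ≤ m * n := Nat.mul_le_mul_right n (by omega)
  · have hqv1 : q * (v - 1) ≤ B * B := Nat.mul_le_mul hqB (by omega)
    have hrn : r * n ≤ (v - 1) * n := Nat.mul_le_mul_right n (by omega)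
    have hvn : (v - 1) * n + n = v * n := by
      have : (v - 1) + 1 = v := by omega
      calc (v - 1) * n + n = ((v - 1) + 1) * n := by ring
      _ = v * n := by rw [this]
    have hmn : m * n = q * (v * n) + r * n := by
      calc m * n = (v * q + r) * n := by rw [hdm2]
      _ = q * (v * n) + r * n := by ring
    have hqvn : q * (v * n) ≤ q * p + q * (v - 1) := by
      calc q * (v * n) ≤ q * (p + v - 1) := Nat.mul_le_mul_left q h2
      _ ≤ q * p + q * (v - 1) := by
        have : p + v - 1 = p + (v - 1) := by omega
        rw [this, Nat.mul_add]
    have hBB : B * B ≤ B ^ 2 := by ring_nf; omega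
    have : m * n < q * p + p := by
      have hrn2 : r * n ≤ v * n - n := by omega
      omega
    calc m * n < q * p + p := this
    _ = (q + 1) * p := by ring

lemma padic_prod (p : ℕ) [hp : Fact p.Prime] (s : Multiset ℕ) (hs : (0 : ℕ) ∉ s) :
    padicValNat p s.prod = (s.map (padicValNat p)).sum := by
  induction s using Multiset.induction with
  | empty => simp
  | cons a s ih =>
    have ha : a ≠ 0 := fun h => hs (h ▸ Multiset.mem_cons_self a s)
    have hs' : (0 : ℕ) ∉ s := fun h => hs (Multiset.mem_cons_of_mem h)
    have hsp : s.prod ≠ 0 := by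
      intro h
      rcases Multiset.prod_eq_zero_iff.mp h with h0
      exact hs' h0
    rw [Multiset.prod_cons, padicValNat.mul ha hsp, Multiset.map_cons, Multiset.sum_cons, ih hs']

lemma fact_val (p N : ℕ) [hp : Fact p.Prime] (hN : N < p ^ 2) :
    padicValNat p (N !) = N / p := by
  have hlog : Nat.log p N < 2 := by
    rcases Nat.eq_zero_or_pos N with h | h
    · simp [h]
    · exact Nat.log_lt_of_lt_pow (by omega) hN
  rw [padicValNat_factorial hlog]
  simp

lemma indicator_sum (a v B : ℕ) (hv : 1 ≤ v) (haB : a < B) :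
    a / v = ∑ j ∈ Finset.Icc 1 B, (if j * v ≤ a then 1 else 0) := by
  have hav : a / v ≤ B := le_trans (Nat.div_le_self a v) (le_of_lt haB)
  have : ∀ j ∈ Finset.Icc 1 B, (if j * v ≤ a then (1:ℕ) else 0)
      = if j ∈ Finset.Icc 1 (a / v) then 1 else 0 := by
    intro j hj
    simp only [Finset.mem_Icc] at hj ⊢
    have : j * v ≤ a ↔ j ≤ a / v := by
      rw [Nat.le_div_iff_mul_le hv]
    simp [this, hj.1]
  rw [Finset.sum_congr rfl this, Finset.sum_ite_mem]
  have hsub : Finset.Icc 1 (a / v) ⊆ Finset.Icc 1 B := by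
    apply Finset.Icc_subset_Icc le_rfl hav
  rw [Finset.inter_eq_right.mpr hsub]
  simp [Nat.card_Icc]

lemma sum_div_eq (u : Multiset ℕ) (v B : ℕ) (hv : 1 ≤ v) (hB : ∀ m ∈ u, m < B) :
    (u.map fun m => m / v).sum
      = ∑ j ∈ Finset.Icc 1 B, Multiset.countP (fun m => j * v ≤ m) u := by
  induction u using Multiset.induction with
  | empty => simp
  | cons a u ih =>
    have haB : a < B := hB a (Multiset.mem_cons_self a u)
    have hB' : ∀ m ∈ u, m < B := fun m hm => hB m (Multiset.mem_cons_of_mem hm)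
    simp only [Multiset.map_cons, Multiset.sum_cons, ih hB', Multiset.countP_cons]
    rw [Finset.sum_add_distrib, indicator_sum a v B hv haB]
    ring

lemma split_countP (u : Multiset ℕ) (x : ℕ) :
    Multiset.countP (fun m => x ≤ m) u
      = Multiset.count x u + Multiset.countP (fun m => x + 1 ≤ m) u := by
  induction u using Multiset.induction with
  | empty => simp
  | cons a u ih =>
    simp only [Multiset.countP_cons, Multiset.count_cons, ih]
    split_ifs with h1 h2 h3 <;> omega

lemma multiset_eq_of_prod_fact (s t : Multiset ℕ) (hs : ∀ x ∈ s, 0 < x) (ht : ∀ x ∈ t, 0 < x)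
    (h : ∀ n : ℕ, (s.map fun m => (m * n)!).prod = (t.map fun m => (m * n)!).prod) :
    s = t := by
  set B := s.sum + t.sum + 1 with hBdef
  have hBpos : 1 ≤ B := by omega
  have hsB : ∀ m ∈ s, m < B := fun m hm =>
    lt_of_le_of_lt (Multiset.le_sum_of_mem hm) (by omega)
  have htB : ∀ m ∈ t, m < B := fun m hm =>
    lt_of_le_of_lt (Multiset.le_sum_of_mem hm) (by omega)
  have hdiv : ∀ v, 1 ≤ v → (s.map fun m => m / v).sum = (t.map fun m => m / v).sum := by
    intro v hv
    by_cases hvB : v < B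
    · obtain ⟨p, hpgt, hpp⟩ := Nat.exists_infinite_primes (B ^ 3 + B ^ 2 + 1)
      haveI : Fact p.Prime := ⟨hpp⟩
      have hpB : B ^ 3 + B ^ 2 < p := by omega
      have hBp : B ≤ p := by nlinarith
      set n := (p + v - 1) / v with hn
      have hnp : n ≤ p := by
        rw [hn]
        have h1 : p + v - 1 ≤ p * v := by
          obtain ⟨w, rfl⟩ := Nat.exists_eq_add_of_le hv
          have hw : w ≤ p * w := Nat.le_mul_of_pos_left w (by omega)
          have hmul : p * (1 + w) = p + p * w := by ring
          omega
        calc (p + v - 1) / v ≤ p * v / v := Nat.div_le_div_right h1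
        _ = p := Nat.mul_div_cancel p hv
      have hpoint : ∀ m, m < B → padicValNat p ((m * n)!) = m / v := by
        intro m hm
        have hmn : m * n < p ^ 2 := by
          calc m * n ≤ (B - 1) * p := Nat.mul_le_mul (by omega) hnp
          _ < p * p := by
            apply Nat.mul_lt_mul_of_lt_of_le (by omega) le_rfl (by nlinarith [hpp.one_lt])
          _ = p ^ 2 := by ring
        rw [fact_val p (m * n) hmn, hn]
        exact key_div_s13 p B v m hv (by omega) (by omega) hpB
      have hval := congrArg (padicValNat p) (h n)
      have hns : (0 : ℕ) ∉ s.map fun m => (m * n)! := by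
        intro hmem
        obtain ⟨m, _, hm0⟩ := Multiset.mem_map.mp hmem
        exact (Nat.factorial_ne_zero _) hm0
      have hnt : (0 : ℕ) ∉ t.map fun m => (m * n)! := by
        intro hmem
        obtain ⟨m, _, hm0⟩ := Multiset.mem_map.mp hmem
        exact (Nat.factorial_ne_zero _) hm0
      -- t version above
      rw [padic_prod p _ hns, padic_prod p _ hnt, Multiset.map_map, Multiset.map_map] at hval
      have hs' : (s.map (padicValNat p ∘ fun m => (m * n)!)) = s.map fun m => m / v := by
        apply Multiset.map_congr rfl
        intro m hm
        exact hpoint m (hsB m hm)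
      have ht' : (t.map (padicValNat p ∘ fun m => (m * n)!)) = t.map fun m => m / v := by
        apply Multiset.map_congr rfl
        intro m hm
        exact hpoint m (htB m hm)
      rw [hs', ht'] at hval
      exact hval
    · push_neg at hvB
      have hz : ∀ (u : Multiset ℕ), (∀ m ∈ u, m < B) → (u.map fun m => m / v).sum = 0 := by
        intro u hu
        apply Multiset.sum_eq_zero
        intro x hx
        obtain ⟨m, hm, rfl⟩ := Multiset.mem_map.mp hx
        exact Nat.div_eq_of_lt (lt_of_lt_of_le (hu m hm) hvB)
      rw [hz s hsB, hz t htB]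
  have hC : ∀ k v, 1 ≤ v → B ≤ v + k →
      Multiset.countP (fun m => v ≤ m) s = Multiset.countP (fun m => v ≤ m) t := by
    intro k
    induction k with
    | zero =>
      intro v hv hBv
      rw [Multiset.countP_eq_zero.mpr, Multiset.countP_eq_zero.mpr]
      · intro m hm; have := htB m hm; omega
      · intro m hm; have := hsB m hm; omega
    | succ k ih =>
      intro v hv hBv
      by_cases hc : B ≤ v + k
      · exact ih v hv hc
      · have hkey := hdiv v hv
        rw [sum_div_eq s v B hv hsB, sum_div_eq t v B hv htB] at hkey
        have hsplit : Finset.Icc 1 B = insert 1 (Finset.Icc 2 B) := by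
          ext j; simp [Finset.mem_Icc, Finset.mem_insert]; omega
        rw [hsplit, Finset.sum_insert (by simp), Finset.sum_insert (by simp)] at hkey
        have hrest : ∀ j ∈ Finset.Icc 2 B,
            Multiset.countP (fun m => j * v ≤ m) s = Multiset.countP (fun m => j * v ≤ m) t := by
          intro j hj
          simp only [Finset.mem_Icc] at hj
          have hjv : v + 1 ≤ j * v := by nlinarith [hj.1]
          exact ih (j * v) (by omega) (by omega)
        rw [Finset.sum_congr rfl hrest] at hkey
        simp only [one_mul] at hkey
        omega
  ext x
  rcases Nat.eq_zero_or_pos x with rfl | hx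
  · rw [Multiset.count_eq_zero.mpr (fun hmem => lt_irrefl 0 (hs 0 hmem)),
      Multiset.count_eq_zero.mpr (fun hmem => lt_irrefl 0 (ht 0 hmem))]
  · have h1 := hC B x hx (by omega)
    have h2 := hC B (x + 1) (by omega) (by omega)
    have e1 := split_countP s x
    have e2 := split_countP t x
    omega

theorem stmt_13 (a b a' b' : Multiset ℕ)
    (ha : ∀ x ∈ a, 0 < x) (hb : ∀ x ∈ b, 0 < x)
    (ha' : ∀ x ∈ a', 0 < x) (hb' : ∀ x ∈ b', 0 < x)
    (hdisj : ∀ x ∈ a, x ∉ b) (hdisj' : ∀ x ∈ a', x ∉ b')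
    (heq : ∀ n : ℕ,
      ((a.map fun m => (Nat.factorial (m * n) : ℚ)).prod /
       (b.map fun m => (Nat.factorial (m * n) : ℚ)).prod) =
      ((a'.map fun m => (Nat.factorial (m * n) : ℚ)).prod /
       (b'.map fun m => (Nat.factorial (m * n) : ℚ)).prod)) :
    a = a' ∧ b = b' := by
  have prod_ne : ∀ (u : Multiset ℕ) (n : ℕ), (u.map fun m => (m * n)!).prod ≠ 0 := by
    intro u n h0
    have := Multiset.prod_eq_zero_iff.mp h0
    obtain ⟨m, _, hm0⟩ := Multiset.mem_map.mp this
    exact Nat.factorial_ne_zero _ hm0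
  have cast_eq : ∀ (u : Multiset ℕ) (n : ℕ),
      (u.map fun m => ((m * n)! : ℚ)).prod = (((u.map fun m => (m * n)!).prod : ℕ) : ℚ) := by
    intro u n
    rw [Nat.cast_multiset_prod, Multiset.map_map]
    rfl
  have key : ∀ n : ℕ,
      ((a + b').map fun m => (m * n)!).prod = ((a' + b).map fun m => (m * n)!).prod := by
    intro n
    have hq := heq n
    rw [cast_eq, cast_eq, cast_eq, cast_eq] at hq
    rw [div_eq_div_iff (by exact_mod_cast prod_ne b n) (by exact_mod_cast prod_ne b' n)] at hq
    rw [← Nat.cast_mul, ← Nat.cast_mul, Nat.cast_inj] at hq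
    rw [Multiset.map_add, Multiset.map_add, Multiset.prod_add, Multiset.prod_add]
    exact hq
  have hmain : a + b' = a' + b := by
    apply multiset_eq_of_prod_fact
    · intro x hx
      rcases Multiset.mem_add.mp hx with h | h
      · exact ha x h
      · exact hb' x h
    · intro x hx
      rcases Multiset.mem_add.mp hx with h | h
      · exact ha' x h
      · exact hb x h
    · exact key
  constructor <;> ext x
  all_goals {
    have hcnt := congrArg (Multiset.count x) hmain
    simp only [Multiset.count_add] at hcnt
    have h1 : Multiset.count x a = 0 ∨ Multiset.count x b = 0 := by
      by_contra hcon
      push_neg at hcon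
      exact (hdisj x (Multiset.count_pos.mp (by omega))) (Multiset.count_pos.mp (by omega))
    have h2 : Multiset.count x a' = 0 ∨ Multiset.count x b' = 0 := by
      by_contra hcon
      push_neg at hcon
      exact (hdisj' x (Multiset.count_pos.mp (by omega))) (Multiset.count_pos.mp (by omega))
    omega
  }
end

section
/- For all coprime positive integers a and b and all real x, the step function f(x) = floor(x/(ab)) - floor(x/(b(a+b))) - floor(x/(a(a+b))) takes only the values 0 and 1. -/
theorem stmt_14 (a b : ℕ) (ha : 0 < a) (hb : 0 < b) (hab : Nat.gcd a b = 1) (x : ℝ) :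
    ⌊x / (a * b : ℝ)⌋ - ⌊x / ((b : ℝ) * (a + b))⌋ - ⌊x / ((a : ℝ) * (a + b))⌋ = 0 ∨
    ⌊x / (a * b : ℝ)⌋ - ⌊x / ((b : ℝ) * (a + b))⌋ - ⌊x / ((a : ℝ) * (a + b))⌋ = 1 := by
  have ha' : (a : ℝ) ≠ 0 := by positivity
  have hb' : (b : ℝ) ≠ 0 := by positivity
  have hs : (a : ℝ) + b ≠ 0 := by positivity
  set u : ℝ := x / ((b : ℝ) * (a + b)) with hu
  set v : ℝ := x / ((a : ℝ) * (a + b)) with hv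
  have key : x / (a * b : ℝ) = u + v := by
    rw [hu, hv]
    field_simp
  rw [key]
  have h1 : ⌊u⌋ + ⌊v⌋ ≤ ⌊u + v⌋ := by
    apply Int.le_floor.2
    push_cast
    exact add_le_add (Int.floor_le u) (Int.floor_le v)
  have h2 : ⌊u + v⌋ < ⌊u⌋ + ⌊v⌋ + 2 := by
    apply Int.floor_lt.2
    push_cast
    have := Int.lt_floor_add_one u
    have := Int.lt_floor_add_one v
    linarith
  omega
end

section
/- Let a > b > 0 be integers with gcd(a,b) = 1 and a - b odd. Then for all real x, the function f(x) = floor(x/(b(a-b))) + floor(x/(2a(a-b))) - floor(x/(2b(a-b))) - floor(x/(a(a-b))) - floor(x/(2ab)) takes only the values 0 and 1. -/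
lemma floor_twomul_aux (r : ℝ) : ⌊2 * r⌋ = ⌊r⌋ + ⌊r + 1/2⌋ := by
  have h0 := Int.fract_nonneg r
  have h1 := Int.fract_lt_one r
  have hr : r = ⌊r⌋ + Int.fract r := (Int.floor_add_fract r).symm
  rcases lt_or_ge (Int.fract r) (1/2) with h | h
  · have e1 : ⌊2 * r⌋ = 2 * ⌊r⌋ := by
      rw [Int.floor_eq_iff]
      constructor <;> push_cast <;> nlinarith [Int.floor_le r]
    have e2 : ⌊r + 1/2⌋ = ⌊r⌋ := by
      rw [Int.floor_eq_iff]
      constructor <;> push_cast <;> nlinarith [Int.floor_le r]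
    omega
  · have e1 : ⌊2 * r⌋ = 2 * ⌊r⌋ + 1 := by
      rw [Int.floor_eq_iff]
      constructor <;> push_cast <;> nlinarith [Int.floor_le r]
    have e2 : ⌊r + 1/2⌋ = ⌊r⌋ + 1 := by
      rw [Int.floor_eq_iff]
      constructor <;> push_cast <;> nlinarith [Int.floor_le r]
    omega

lemma floor_sub_aux (p q : ℝ) : ⌊p + q⌋ - ⌊p⌋ - ⌊q⌋ = 0 ∨ ⌊p + q⌋ - ⌊p⌋ - ⌊q⌋ = 1 := by
  have h1 : ⌊p⌋ + ⌊q⌋ ≤ ⌊p + q⌋ := by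
    apply Int.le_floor.2
    push_cast
    exact add_le_add (Int.floor_le p) (Int.floor_le q)
  have h2 : ⌊p + q⌋ < ⌊p⌋ + ⌊q⌋ + 2 := by
    apply Int.floor_lt.2
    push_cast
    linarith [Int.lt_floor_add_one p, Int.lt_floor_add_one q]
  omega

theorem stmt_15 (a b : ℕ) (hb : 0 < b) (hba : b < a) (hab : Nat.gcd a b = 1)
    (hodd : Odd (a - b)) (x : ℝ) :
    ⌊x / ((b : ℝ) * ((a : ℝ) - b))⌋ + ⌊x / (2 * (a : ℝ) * ((a : ℝ) - b))⌋
      - ⌊x / (2 * (b : ℝ) * ((a : ℝ) - b))⌋ - ⌊x / ((a : ℝ) * ((a : ℝ) - b))⌋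
      - ⌊x / (2 * (a : ℝ) * b)⌋ = 0 ∨
    ⌊x / ((b : ℝ) * ((a : ℝ) - b))⌋ + ⌊x / (2 * (a : ℝ) * ((a : ℝ) - b))⌋
      - ⌊x / (2 * (b : ℝ) * ((a : ℝ) - b))⌋ - ⌊x / ((a : ℝ) * ((a : ℝ) - b))⌋
      - ⌊x / (2 * (a : ℝ) * b)⌋ = 1 := by
  have ha' : (0:ℝ) < a := by exact_mod_cast hb.trans hba
  have hb' : (0:ℝ) < b := by exact_mod_cast hb
  have hd : (0:ℝ) < (a:ℝ) - b := by
    have : (b:ℝ) < a := by exact_mod_cast hba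
    linarith
  set y : ℝ := x / (2 * a * b * ((a:ℝ) - b)) with hy
  have e1 : x / ((b : ℝ) * ((a : ℝ) - b)) = 2 * (a * y) := by
    rw [hy]; field_simp
  have e2 : x / (2 * (a : ℝ) * ((a : ℝ) - b)) = b * y := by
    rw [hy]; field_simp
  have e3 : x / (2 * (b : ℝ) * ((a : ℝ) - b)) = a * y := by
    rw [hy]; field_simp
  have e4 : x / ((a : ℝ) * ((a : ℝ) - b)) = 2 * (b * y) := by
    rw [hy]; field_simp
  have e5 : x / (2 * (a : ℝ) * b) = ((a:ℝ) - b) * y := by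
    rw [hy]; field_simp
  rw [e1, e2, e3, e4, e5, floor_twomul_aux (a * y), floor_twomul_aux (b * y)]
  have key : (a:ℝ) * y + 1/2 = (b * y + 1/2) + ((a:ℝ) - b) * y := by ring
  have := floor_sub_aux ((b:ℝ) * y + 1/2) (((a:ℝ) - b) * y)
  rw [← key] at this
  rcases this with h | h
  · left; omega
  · right; omega
end

section
/- Let a, b be coprime positive integers with a + b odd. Then for all real x, the function f(x) = floor(x/(b(a+b))) + floor(x/(a(a+b))) - floor(x/(2b(a+b))) - floor(x/(2a(a+b))) - floor(x/(2ab)) takes only the values 0 and 1. -/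
lemma key_floor (u v : ℝ) :
    ⌊2 * u⌋ + ⌊2 * v⌋ - ⌊u⌋ - ⌊v⌋ - ⌊u + v⌋ = 0 ∨
    ⌊2 * u⌋ + ⌊2 * v⌋ - ⌊u⌋ - ⌊v⌋ - ⌊u + v⌋ = 1 := by
  set α := Int.fract u with hα
  set β := Int.fract v with hβ
  have hαe : α = u - ⌊u⌋ := by rw [hα, Int.fract]
  have hβe : β = v - ⌊v⌋ := by rw [hβ, Int.fract]
  have hα0 : 0 ≤ α := Int.fract_nonneg u
  have hα1 : α < 1 := Int.fract_lt_one u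
  have hβ0 : 0 ≤ β := Int.fract_nonneg v
  have hβ1 : β < 1 := Int.fract_lt_one v
  have h2u : ⌊2 * u⌋ = 2 * ⌊u⌋ + ⌊2 * α⌋ := by
    have e : (2 : ℝ) * u = 2 * α + ((2 * ⌊u⌋ : ℤ) : ℝ) := by rw [hαe]; push_cast; ring
    rw [e, Int.floor_add_intCast]; ring
  have h2v : ⌊2 * v⌋ = 2 * ⌊v⌋ + ⌊2 * β⌋ := by
    have e : (2 : ℝ) * v = 2 * β + ((2 * ⌊v⌋ : ℤ) : ℝ) := by rw [hβe]; push_cast; ring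
    rw [e, Int.floor_add_intCast]; ring
  have hsum : ⌊u + v⌋ = ⌊u⌋ + ⌊v⌋ + ⌊α + β⌋ := by
    have e : u + v = (α + β) + ((⌊u⌋ + ⌊v⌋ : ℤ) : ℝ) := by rw [hαe, hβe]; push_cast; ring
    rw [e, Int.floor_add_intCast]; ring
  rw [h2u, h2v, hsum]
  have ha01 : ⌊2 * α⌋ = 0 ∨ ⌊2 * α⌋ = 1 := by
    have h1 : (0 : ℤ) ≤ ⌊2 * α⌋ := Int.floor_nonneg.2 (by linarith)
    have h2 : ⌊2 * α⌋ < 2 := Int.floor_lt.2 (by push_cast; linarith)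
    omega
  have hb01 : ⌊2 * β⌋ = 0 ∨ ⌊2 * β⌋ = 1 := by
    have h1 : (0 : ℤ) ≤ ⌊2 * β⌋ := Int.floor_nonneg.2 (by linarith)
    have h2 : ⌊2 * β⌋ < 2 := Int.floor_lt.2 (by push_cast; linarith)
    omega
  have hs01 : ⌊α + β⌋ = 0 ∨ ⌊α + β⌋ = 1 := by
    have h1 : (0 : ℤ) ≤ ⌊α + β⌋ := Int.floor_nonneg.2 (by linarith)
    have h2 : ⌊α + β⌋ < 2 := Int.floor_lt.2 (by push_cast; linarith)
    omega
  have H1 : ⌊α + β⌋ ≤ ⌊2 * α⌋ + ⌊2 * β⌋ := by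
    rcases hs01 with h | h
    · have h1 : (0 : ℤ) ≤ ⌊2 * α⌋ := Int.floor_nonneg.2 (by linarith)
      have h2 : (0 : ℤ) ≤ ⌊2 * β⌋ := Int.floor_nonneg.2 (by linarith)
      omega
    · have h1 : (1 : ℝ) ≤ α + β := by
        have := Int.floor_le (α + β); rw [h] at this; exact_mod_cast this
      rcases le_total α β with hle | hle
      · have hx : (1 : ℤ) ≤ ⌊2 * β⌋ := Int.le_floor.2 (by push_cast; linarith)
        have hy : (0 : ℤ) ≤ ⌊2 * α⌋ := Int.floor_nonneg.2 (by linarith)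
        omega
      · have hx : (1 : ℤ) ≤ ⌊2 * α⌋ := Int.le_floor.2 (by push_cast; linarith)
        have hy : (0 : ℤ) ≤ ⌊2 * β⌋ := Int.floor_nonneg.2 (by linarith)
        omega
  have H2 : ⌊2 * α⌋ + ⌊2 * β⌋ ≤ ⌊α + β⌋ + 1 := by
    rcases ha01 with h | h <;> rcases hb01 with h' | h'
    · have : (0 : ℤ) ≤ ⌊α + β⌋ := Int.floor_nonneg.2 (by linarith)
      omega
    · have : (0 : ℤ) ≤ ⌊α + β⌋ := Int.floor_nonneg.2 (by linarith)
      omega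
    · have : (0 : ℤ) ≤ ⌊α + β⌋ := Int.floor_nonneg.2 (by linarith)
      omega
    · have ha' : (1 : ℝ) ≤ 2 * α := by
        have := Int.floor_le (2 * α); rw [h] at this; exact_mod_cast this
      have hb' : (1 : ℝ) ≤ 2 * β := by
        have := Int.floor_le (2 * β); rw [h'] at this; exact_mod_cast this
      have : (1 : ℤ) ≤ ⌊α + β⌋ := Int.le_floor.2 (by push_cast; linarith)
      omega
  omega

theorem stmt_16 (a b : ℕ) (ha : 0 < a) (hb : 0 < b) (hab : Nat.gcd a b = 1)
    (hodd : Odd (a + b)) (x : ℝ) :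
    ⌊x / ((b : ℝ) * ((a : ℝ) + b))⌋ + ⌊x / ((a : ℝ) * ((a : ℝ) + b))⌋
      - ⌊x / (2 * (b : ℝ) * ((a : ℝ) + b))⌋ - ⌊x / (2 * (a : ℝ) * ((a : ℝ) + b))⌋
      - ⌊x / (2 * (a : ℝ) * b)⌋ = 0 ∨
    ⌊x / ((b : ℝ) * ((a : ℝ) + b))⌋ + ⌊x / ((a : ℝ) * ((a : ℝ) + b))⌋
      - ⌊x / (2 * (b : ℝ) * ((a : ℝ) + b))⌋ - ⌊x / (2 * (a : ℝ) * ((a : ℝ) + b))⌋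
      - ⌊x / (2 * (a : ℝ) * b)⌋ = 1 := by
  have ha' : (0 : ℝ) < a := by exact_mod_cast ha
  have hb' : (0 : ℝ) < b := by exact_mod_cast hb
  have hab' : (0 : ℝ) < (a : ℝ) + b := by linarith
  set u : ℝ := x / (2 * (b : ℝ) * ((a : ℝ) + b)) with hu
  set v : ℝ := x / (2 * (a : ℝ) * ((a : ℝ) + b)) with hv
  have e1 : x / ((b : ℝ) * ((a : ℝ) + b)) = 2 * u := by
    rw [hu]; field_simp
  have e2 : x / ((a : ℝ) * ((a : ℝ) + b)) = 2 * v := by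
    rw [hv]; field_simp
  have e3 : x / (2 * (a : ℝ) * b) = u + v := by
    rw [hu, hv]; field_simp
  rw [e1, e2, e3]
  exact key_floor u v
end

section
/- Let a_1, ..., a_K and b_1, ..., b_L be positive integers and let d be a positive integer dividing all of them. Then u_n(a,b) is an integer for all n if and only if u_n(a/d, b/d) is an integer for all n, where a/d = (a_1/d, ..., a_K/d) and b/d = (b_1/d, ..., b_L/d). -/
open Finset Nat

/-- Key arithmetic fact for the prime-approximation trick. -/
lemma key_div_s18 (c N D p : ℕ) (hD : 0 < D) (hc : 0 < c) (hp : c * D < p) :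
    c * (N * p / D + 1) / p = c * N / D := by
  have hp0 : 0 < p := lt_of_le_of_lt (Nat.zero_le _) hp
  set e := N * p / D with he
  set f := N * p % D with hf
  have hef : N * p = D * e + f := (Nat.div_add_mod _ _).symm
  have hfD : f < D := Nat.mod_lt _ hD
  set q := c * N / D with hq
  set r := c * N % D with hr
  have hqr : c * N = D * q + r := (Nat.div_add_mod _ _).symm
  have hrD : r < D := Nat.mod_lt _ hD
  have hmul : c * D * e + c * f = D * q * p + r * p := by
    have : c * (N * p) = (D * q + r) * p := by rw [← hqr]; ring
    rw [hef] at this; nlinarith [this]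
  apply Nat.div_eq_of_lt_le
  · -- q * p ≤ c * (e + 1)
    have h1 : q * p * D ≤ c * (e + 1) * D := by nlinarith
    exact Nat.le_of_mul_le_mul_right h1 hD
  · -- c * (e + 1) < (q + 1) * p
    have h1 : c * (e + 1) * D < (q + 1) * p * D := by nlinarith
    exact Nat.lt_of_mul_lt_mul_right h1

lemma prod_fact_factorization {M : ℕ} (c : Fin M → ℕ) (p : ℕ) :
    (∏ i, Nat.factorial (c i)).factorization p = ∑ i, (Nat.factorial (c i)).factorization p := by
  rw [Nat.factorization_prod (fun i _ => (Nat.factorial_pos _).ne')]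
  simp [Finset.sum_apply']

/-- From the universal divisibility to the floor-type inequality. -/
lemma dvd_to_G {K L : ℕ} (a : Fin K → ℕ) (b : Fin L → ℕ)
    (ha : ∀ k, 0 < a k) (hb : ∀ l, 0 < b l)
    (H : ∀ n : ℕ, (∏ l, Nat.factorial (b l * n)) ∣ (∏ k, Nat.factorial (a k * n)))
    (N D : ℕ) (hD : 0 < D) :
    ∑ l, b l * N / D ≤ ∑ k, a k * N / D := by
  set C := (∑ k, a k + ∑ l, b l + 1) * (N + D + 1) with hC
  obtain ⟨p, hpC, pp⟩ := Nat.exists_infinite_primes (C + 1)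
  haveI : Fact p.Prime := ⟨pp⟩
  have hp1 : 1 < p := pp.one_lt
  -- bounds for each coefficient
  have hbound : ∀ c : ℕ, (c ∈ Set.range a ∨ c ∈ Set.range b) → c * D < p ∧ c * N < p := by
    rintro c hc
    have hcle : c ≤ ∑ k, a k + ∑ l, b l := by
      rcases hc with ⟨k, rfl⟩ | ⟨l, rfl⟩
      · exact le_trans (Finset.single_le_sum (f := fun k => a k) (fun _ _ => Nat.zero_le _) (Finset.mem_univ k)) (Nat.le_add_right _ _)
      · exact le_trans (Finset.single_le_sum (f := fun l => b l) (fun _ _ => Nat.zero_le _) (Finset.mem_univ l)) (Nat.le_add_left _ _)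
    constructor
    · calc c * D ≤ (∑ k, a k + ∑ l, b l) * (N + D + 1) := by
            exact Nat.mul_le_mul hcle (by omega)
        _ < C + 1 := by rw [hC]; nlinarith
        _ ≤ p := hpC
    · calc c * N ≤ (∑ k, a k + ∑ l, b l) * (N + D + 1) := by
            exact Nat.mul_le_mul hcle (by omega)
        _ < C + 1 := by rw [hC]; nlinarith
        _ ≤ p := hpC
  set m := N * p / D + 1 with hm
  -- each coefficient c satisfies c * m < p ^ 2
  have hsmall : ∀ c : ℕ, c * D < p → c * N < p → c * m < p ^ 2 := by
    intro c h1 h2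
    have hc_lt : c < p := lt_of_le_of_lt (Nat.le_mul_of_pos_right c hD) h1
    have hmle : m ≤ N * p + 1 := by
      have := Nat.div_le_self (N * p) D
      have h3 : N * p / D ≤ N * p := Nat.div_le_self _ _
      omega
    calc c * m ≤ c * (N * p + 1) := Nat.mul_le_mul_left c hmle
      _ = c * N * p + c := by ring
      _ < c * N * p + p := by omega
      _ = (c * N + 1) * p := by ring
      _ ≤ p * p := Nat.mul_le_mul_right p (by omega)
      _ = p ^ 2 := (sq p).symm
  -- Legendre with bound 2
  have hval : ∀ c : ℕ, 0 < c → c * D < p → c * N < p →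
      (Nat.factorial (c * m)).factorization p = c * m / p := by
    intro c h0 h1 h2
    have hm0 : c * m ≠ 0 := (Nat.mul_pos h0 (Nat.succ_pos _)).ne'
    rw [Nat.factorization_def _ pp, padicValNat_factorial (b := 2)
      (Nat.log_lt_of_lt_pow hm0 (hsmall c h1 h2))]
    simp
  -- use H at m
  have hdvd := H m
  have hfac := (Nat.factorization_le_iff_dvd
    (Finset.prod_ne_zero_iff.2 fun l _ => (Nat.factorial_pos _).ne')
    (Finset.prod_ne_zero_iff.2 fun k _ => (Nat.factorial_pos _).ne')).2 hdvd p
  rw [prod_fact_factorization, prod_fact_factorization] at hfac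
  have hL : ∀ l, (Nat.factorial (b l * m)).factorization p = b l * m / p := fun l =>
    hval _ (hb l) (hbound _ (Or.inr ⟨l, rfl⟩)).1 (hbound _ (Or.inr ⟨l, rfl⟩)).2
  have hK : ∀ k, (Nat.factorial (a k * m)).factorization p = a k * m / p := fun k =>
    hval _ (ha k) (hbound _ (Or.inl ⟨k, rfl⟩)).1 (hbound _ (Or.inl ⟨k, rfl⟩)).2
  simp only [hL, hK] at hfac
  -- rewrite c * m / p = c * N / D
  have hkey : ∀ c : ℕ, 0 < c → c * D < p → c * m / p = c * N / D := fun c hc h1 =>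
    key_div_s18 c N D p hD hc h1
  calc ∑ l, b l * N / D = ∑ l, b l * m / p := by
        refine Finset.sum_congr rfl fun l _ => ?_
        rw [hkey _ (hb l) (hbound _ (Or.inr ⟨l, rfl⟩)).1]
    _ ≤ ∑ k, a k * m / p := hfac
    _ = ∑ k, a k * N / D := by
        refine Finset.sum_congr rfl fun k _ => ?_
        rw [hkey _ (ha k) (hbound _ (Or.inl ⟨k, rfl⟩)).1]

/-- From the floor-type inequality to the universal divisibility. -/
lemma G_to_dvd {K L : ℕ} (a : Fin K → ℕ) (b : Fin L → ℕ)
    (G : ∀ N D : ℕ, 0 < D → ∑ l, b l * N / D ≤ ∑ k, a k * N / D) :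
    ∀ n : ℕ, (∏ l, Nat.factorial (b l * n)) ∣ (∏ k, Nat.factorial (a k * n)) := by
  intro n
  rw [← Nat.factorization_le_iff_dvd
    (Finset.prod_ne_zero_iff.2 fun l _ => (Nat.factorial_pos _).ne')
    (Finset.prod_ne_zero_iff.2 fun k _ => (Nat.factorial_pos _).ne')]
  intro p
  rw [prod_fact_factorization, prod_fact_factorization]
  by_cases pp : p.Prime
  · haveI : Fact p.Prime := ⟨pp⟩
    set S := (∑ k, a k + ∑ l, b l) * n + 1 with hS
    set B := Nat.log p S + 1 with hB
    have hbnd : ∀ c : ℕ, (c ∈ Set.range a ∨ c ∈ Set.range b) → Nat.log p (c * n) < B := by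
      rintro c hc
      have hcle : c ≤ ∑ k, a k + ∑ l, b l := by
        rcases hc with ⟨k, rfl⟩ | ⟨l, rfl⟩
        · exact le_trans (Finset.single_le_sum (f := fun k => a k) (fun _ _ => Nat.zero_le _) (Finset.mem_univ k)) (Nat.le_add_right _ _)
        · exact le_trans (Finset.single_le_sum (f := fun l => b l) (fun _ _ => Nat.zero_le _) (Finset.mem_univ l)) (Nat.le_add_left _ _)
      have : c * n ≤ S := le_trans (Nat.mul_le_mul_right n hcle) (Nat.le_succ _)
      exact lt_of_le_of_lt (Nat.log_mono_right this) (Nat.lt_succ_self _)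
    have hval : ∀ c : ℕ, (c ∈ Set.range a ∨ c ∈ Set.range b) →
        (Nat.factorial (c * n)).factorization p = ∑ i ∈ Finset.Ico 1 B, c * n / p ^ i := by
      intro c hc
      rw [Nat.factorization_def _ pp, padicValNat_factorial (hbnd c hc)]
    calc ∑ l, (Nat.factorial (b l * n)).factorization p
        = ∑ l, ∑ i ∈ Finset.Ico 1 B, b l * n / p ^ i :=
          Finset.sum_congr rfl fun l _ => hval _ (Or.inr ⟨l, rfl⟩)
      _ = ∑ i ∈ Finset.Ico 1 B, ∑ l, b l * n / p ^ i := Finset.sum_comm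
      _ ≤ ∑ i ∈ Finset.Ico 1 B, ∑ k, a k * n / p ^ i :=
          Finset.sum_le_sum fun i _ => G n (p ^ i) (pow_pos pp.pos i)
      _ = ∑ k, ∑ i ∈ Finset.Ico 1 B, a k * n / p ^ i := Finset.sum_comm
      _ = ∑ k, (Nat.factorial (a k * n)).factorization p :=
          (Finset.sum_congr rfl fun k _ => hval _ (Or.inl ⟨k, rfl⟩)).symm
  · simp [Nat.factorization_eq_zero_of_not_prime _ pp]

lemma div_helper1 {c d : ℕ} (hd : 0 < d) (h : d ∣ c) (N D : ℕ) :
    c / d * N / D = c * N / (d * D) := by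
  obtain ⟨e, rfl⟩ := h
  rw [Nat.mul_div_cancel_left e hd, Nat.mul_assoc, Nat.mul_div_mul_left _ _ hd]

lemma div_helper2 {c d : ℕ} (hd : 0 < d) (h : d ∣ c) (n : ℕ) :
    c / d * (d * n) = c * n := by
  obtain ⟨e, rfl⟩ := h
  rw [Nat.mul_div_cancel_left e hd]; ring

theorem stmt_18 (K L : ℕ) (a : Fin K → ℕ) (b : Fin L → ℕ)
    (ha : ∀ k, 0 < a k) (hb : ∀ l, 0 < b l)
    (d : ℕ) (hd : 0 < d) (hda : ∀ k, d ∣ a k) (hdb : ∀ l, d ∣ b l) :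
    (∀ n : ℕ, (∏ l, Nat.factorial (b l * n)) ∣ (∏ k, Nat.factorial (a k * n))) ↔
    (∀ n : ℕ, (∏ l, Nat.factorial (b l / d * n)) ∣ (∏ k, Nat.factorial (a k / d * n))) := by
  constructor
  · intro H
    apply G_to_dvd
    intro N D hD
    have hG := dvd_to_G a b ha hb H N (d * D) (Nat.mul_pos hd hD)
    calc ∑ l, b l / d * N / D = ∑ l, b l * N / (d * D) := by
          exact Finset.sum_congr rfl fun l _ => div_helper1 hd (hdb l) N D
      _ ≤ ∑ k, a k * N / (d * D) := hG
      _ = ∑ k, a k / d * N / D := by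
          exact (Finset.sum_congr rfl fun k _ => div_helper1 hd (hda k) N D).symm
  · intro H n
    have := H (d * n)
    have hrb : ∀ l, b l / d * (d * n) = b l * n := fun l => div_helper2 hd (hdb l) n
    have hra : ∀ k, a k / d * (d * n) = a k * n := fun k => div_helper2 hd (hda k) n
    simpa [hrb, hra] using this
end
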